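/- arXiv:math/0204281 — 5 statements merged into one kernel-verified Lean document; each statement's English description precedes it below -/
import Mathlib

section
/- Under the fusion data hypotheses, for all λ, μ ∈ Γ one has Σ_{γ∈Γ} conj(Y_{λγ}) · Y_{μγ} = w_Γ · Σ_{θ∈Θ} N_{λ̄μ}^θ · d_θ. In particular the quantity ⟨y^λ, y^μ⟩_Γ := Σ_{γ∈Γ} conj(Y_{λγ}) Y_{μγ} is a nonnegative real number for λ, μ ∈ Γ. -/
noncomputable section

/-- The coupling matrix `Z` built from the `Y`-matrix, the dimension function `d` and the
subsystem `Γ`: `Z_{λμ} = w_Γ⁻¹ ∑_{γ ∈ Γ} conj(Y_{λγ}) Y_{μγ}` if `λ, μ ∈ Γ` and `0` otherwise,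
where `w_Γ = ∑_{γ ∈ Γ} d_γ²`. -/
def Zmat {I : Type*} [DecidableEq I] (Y : I → I → ℂ) (d : I → ℝ) (Γ : Finset I) (l m : I) : ℂ :=
  if l ∈ Γ ∧ m ∈ Γ then
    ((∑ γ ∈ Γ, d γ ^ 2 : ℝ) : ℂ)⁻¹ * ∑ γ ∈ Γ, star (Y l γ) * Y m γ
  else 0

theorem stmt6
    {I : Type*} [Fintype I] [DecidableEq I] (zero : I) (bar : I → I)
    (hbar : Function.Involutive bar) (hbar0 : bar zero = zero)
    (N : I → I → I → ℕ)
    (hNsymm : ∀ l m v, N l m v = N m l v)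
    (hN0 : ∀ l v, N zero l v = if l = v then 1 else 0)
    (hFrob : ∀ l m v, N l m v = N (bar l) v m)
    (d : I → ℝ) (hdpos : ∀ l, 0 < d l) (hd0 : d zero = 1)
    (hdbar : ∀ l, d (bar l) = d l)
    (Y : I → I → ℂ)
    (hYsymm : ∀ l m, Y l m = Y m l)
    (hY0 : ∀ l, Y zero l = d l)
    (hYconj : ∀ l m, star (Y l m) = Y (bar l) m)
    (hYprod : ∀ l m r, Y l r * Y m r = (d r : ℂ) * ∑ v, (N l m v : ℂ) * Y v r)
    (Γ : Finset I) (hΓ0 : zero ∈ Γ) (hΓbar : ∀ γ ∈ Γ, bar γ ∈ Γ)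
    (hΓfus : ∀ l ∈ Γ, ∀ m ∈ Γ, ∀ v, N l m v ≠ 0 → v ∈ Γ)
    (Θ : Finset I) (hΘΓ : Θ ⊆ Γ) (hΘ0 : zero ∈ Θ) (hΘbar : ∀ θ ∈ Θ, bar θ ∈ Θ)
    (hdeg : ∀ μ ∈ Θ, ∑ γ ∈ Γ, (d γ : ℂ) * Y μ γ = ((∑ γ ∈ Γ, d γ ^ 2 : ℝ) : ℂ) * d μ)
    (hndeg : ∀ μ ∈ Γ, μ ∉ Θ → ∑ γ ∈ Γ, (d γ : ℂ) * Y μ γ = 0)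
     :
    ∀ l ∈ Γ, ∀ m ∈ Γ,
      (∑ γ ∈ Γ, star (Y l γ) * Y m γ
          = ((∑ γ ∈ Γ, d γ ^ 2 : ℝ) : ℂ) * ∑ θ ∈ Θ, (N (bar l) m θ : ℂ) * d θ) ∧
      ∃ t : ℝ, 0 ≤ t ∧ ∑ γ ∈ Γ, star (Y l γ) * Y m γ = (t : ℂ) := by
  intro l hl m hm
  have hbl : bar l ∈ Γ := hΓbar l hl
  have step1 : ∑ γ ∈ Γ, star (Y l γ) * Y m γ
      = ∑ v, (N (bar l) m v : ℂ) * ∑ γ ∈ Γ, (d γ : ℂ) * Y v γ := by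
    calc ∑ γ ∈ Γ, star (Y l γ) * Y m γ
        = ∑ γ ∈ Γ, ∑ v, (N (bar l) m v : ℂ) * ((d γ : ℂ) * Y v γ) := by
          refine Finset.sum_congr rfl fun γ _ => ?_
          rw [hYconj, hYprod, Finset.mul_sum]
          exact Finset.sum_congr rfl fun v _ => by ring
      _ = ∑ v, ∑ γ ∈ Γ, (N (bar l) m v : ℂ) * ((d γ : ℂ) * Y v γ) := Finset.sum_comm
      _ = ∑ v, (N (bar l) m v : ℂ) * ∑ γ ∈ Γ, (d γ : ℂ) * Y v γ := by
          exact Finset.sum_congr rfl fun v _ => (Finset.mul_sum _ _ _).symm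
  have step2 : ∑ v, (N (bar l) m v : ℂ) * ∑ γ ∈ Γ, (d γ : ℂ) * Y v γ
      = ∑ θ ∈ Θ, (N (bar l) m θ : ℂ) * (((∑ γ ∈ Γ, d γ ^ 2 : ℝ) : ℂ) * d θ) := by
    rw [← Finset.sum_subset (Finset.subset_univ Θ)]
    · exact Finset.sum_congr rfl fun θ hθ => by rw [hdeg θ hθ]
    · intro v _ hv
      by_cases hvΓ : v ∈ Γ
      · rw [hndeg v hvΓ hv, mul_zero]
      · have : N (bar l) m v = 0 := by
          by_contra h; exact hvΓ (hΓfus (bar l) hbl m hm v h)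
        rw [this]; simp
  have key : ∑ γ ∈ Γ, star (Y l γ) * Y m γ
      = ((∑ γ ∈ Γ, d γ ^ 2 : ℝ) : ℂ) * ∑ θ ∈ Θ, (N (bar l) m θ : ℂ) * d θ := by
    rw [step1, step2, Finset.mul_sum]
    exact Finset.sum_congr rfl fun θ _ => by ring
  refine ⟨key, (∑ γ ∈ Γ, d γ ^ 2) * ∑ θ ∈ Θ, (N (bar l) m θ : ℝ) * d θ, ?_, ?_⟩
  · apply mul_nonneg
    · exact Finset.sum_nonneg fun γ _ => sq_nonneg _
    · exact Finset.sum_nonneg fun θ _ => mul_nonneg (Nat.cast_nonneg _) (hdpos θ).le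
  · rw [key]; push_cast; ring
end
end

section
/- Under the fusion data hypotheses, assume in addition that d_θ is a positive integer for every θ ∈ Θ. Then every entry Z_{λμ} of the matrix Z is a nonnegative integer, and Z_{00} = 1. -/
noncomputable section

theorem stmt7
    {I : Type*} [Fintype I] [DecidableEq I] (zero : I) (bar : I → I)
    (hbar : Function.Involutive bar) (hbar0 : bar zero = zero)
    (N : I → I → I → ℕ)
    (hNsymm : ∀ l m v, N l m v = N m l v)
    (hN0 : ∀ l v, N zero l v = if l = v then 1 else 0)
    (hFrob : ∀ l m v, N l m v = N (bar l) v m)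
    (d : I → ℝ) (hdpos : ∀ l, 0 < d l) (hd0 : d zero = 1)
    (hdbar : ∀ l, d (bar l) = d l)
    (Y : I → I → ℂ)
    (hYsymm : ∀ l m, Y l m = Y m l)
    (hY0 : ∀ l, Y zero l = d l)
    (hYconj : ∀ l m, star (Y l m) = Y (bar l) m)
    (hYprod : ∀ l m r, Y l r * Y m r = (d r : ℂ) * ∑ v, (N l m v : ℂ) * Y v r)
    (Γ : Finset I) (hΓ0 : zero ∈ Γ) (hΓbar : ∀ γ ∈ Γ, bar γ ∈ Γ)
    (hΓfus : ∀ l ∈ Γ, ∀ m ∈ Γ, ∀ v, N l m v ≠ 0 → v ∈ Γ)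
    (Θ : Finset I) (hΘΓ : Θ ⊆ Γ) (hΘ0 : zero ∈ Θ) (hΘbar : ∀ θ ∈ Θ, bar θ ∈ Θ)
    (hdeg : ∀ μ ∈ Θ, ∑ γ ∈ Γ, (d γ : ℂ) * Y μ γ = ((∑ γ ∈ Γ, d γ ^ 2 : ℝ) : ℂ) * d μ)
    (hndeg : ∀ μ ∈ Γ, μ ∉ Θ → ∑ γ ∈ Γ, (d γ : ℂ) * Y μ γ = 0)
    (hdint : ∀ θ ∈ Θ, ∃ k : ℕ, 0 < k ∧ d θ = k) :
    (∀ l m : I, ∃ k : ℕ, Zmat Y d Γ l m = k) ∧ Zmat Y d Γ zero zero = 1 := by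
  have hw : (0:ℝ) < ∑ γ ∈ Γ, d γ ^ 2 :=
    Finset.sum_pos (fun γ _ => by have := hdpos γ; positivity) ⟨zero, hΓ0⟩
  have hwC : ((∑ γ ∈ Γ, d γ ^ 2 : ℝ) : ℂ) ≠ 0 := by
    exact_mod_cast hw.ne'
  have key : ∀ l ∈ Γ, ∀ m ∈ Γ,
      Zmat Y d Γ l m = ∑ ν ∈ Θ, (N (bar l) m ν : ℂ) * (d ν : ℂ) := by
    intro l hl m hm
    have hbl : bar l ∈ Γ := hΓbar l hl
    have h1 : ∑ γ ∈ Γ, star (Y l γ) * Y m γ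
        = ∑ ν, (N (bar l) m ν : ℂ) * ∑ γ ∈ Γ, (d γ : ℂ) * Y ν γ := by
      have e1 : ∑ γ ∈ Γ, star (Y l γ) * Y m γ
          = ∑ γ ∈ Γ, ∑ ν, (N (bar l) m ν : ℂ) * ((d γ : ℂ) * Y ν γ) := by
        refine Finset.sum_congr rfl fun γ _ => ?_
        rw [hYconj, hYprod, Finset.mul_sum]
        exact Finset.sum_congr rfl fun ν _ => by ring
      rw [e1, Finset.sum_comm]
      exact Finset.sum_congr rfl fun ν _ => by rw [Finset.mul_sum]
    have h2 : ∑ ν, (N (bar l) m ν : ℂ) * ∑ γ ∈ Γ, (d γ : ℂ) * Y ν γ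
        = ∑ ν ∈ Θ, (N (bar l) m ν : ℂ) * ∑ γ ∈ Γ, (d γ : ℂ) * Y ν γ := by
      refine (Finset.sum_subset (Finset.subset_univ Θ) fun ν _ hν => ?_).symm
      by_cases hνΓ : ν ∈ Γ
      · rw [hndeg ν hνΓ hν, mul_zero]
      · have : N (bar l) m ν = 0 := by
          by_contra h
          exact hνΓ (hΓfus (bar l) hbl m hm ν h)
        simp [this]
    have h3 : ∑ ν ∈ Θ, (N (bar l) m ν : ℂ) * ∑ γ ∈ Γ, (d γ : ℂ) * Y ν γ
        = ((∑ γ ∈ Γ, d γ ^ 2 : ℝ) : ℂ) * ∑ ν ∈ Θ, (N (bar l) m ν : ℂ) * (d ν : ℂ) := by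
      rw [Finset.mul_sum]
      refine Finset.sum_congr rfl fun ν hν => ?_
      rw [hdeg ν hν]; ring
    rw [Zmat, if_pos ⟨hl, hm⟩, h1, h2, h3, ← mul_assoc, inv_mul_cancel₀ hwC, one_mul]
  constructor
  · intro l m
    by_cases h : l ∈ Γ ∧ m ∈ Γ
    · obtain ⟨hl, hm⟩ := h
      refine ⟨∑ ν ∈ Θ, N (bar l) m ν * ⌊d ν⌋₊, ?_⟩
      rw [key l hl m hm]
      push_cast
      refine Finset.sum_congr rfl fun ν hν => ?_
      obtain ⟨k, -, hk⟩ := hdint ν hν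
      rw [hk]
      norm_num
    · exact ⟨0, by rw [Zmat, if_neg h]; simp⟩
  · rw [key zero hΓ0 zero hΓ0]
    rw [Finset.sum_eq_single zero]
    · simp [hbar0, hN0, hd0]
    · intro ν hν hνz
      rw [hbar0, hN0]
      simp [Ne.symm hνz]
    · intro h; exact absurd hΘ0 h
end
end

section
/- Under the fusion data hypotheses, let ω : I → ℂ be a function such that ω_θ = 1 for every θ ∈ Θ (Θ is purely bosonic) and such that ω_μ = ω_λ · ω_θ whenever λ, μ ∈ Γ, θ ∈ Θ and N_{λθ}^μ ≠ 0 (triviality of the monodromy of Θ with Γ). Then ω_λ · Z_{λμ} = Z_{λμ} · ω_μ for all λ, μ ∈ I; equivalently, T Z = Z T where T is the diagonal I × I complex matrix with diagonal entries T_{λλ} = ω_λ. -/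
/-!
For `λ, μ ∈ Γ`, `∑_{γ ∈ Γ} conj(Y_{λγ}) Y_{μγ} = w_Γ ∑_{θ ∈ Θ} N_{λ̄μ}^θ d_θ`: expanding by the
product rule, the `γ`-sum of `d_γ Y_{νγ}` survives only for `ν ∈ Θ`, as fusion closure puts every
`ν` with `N_{λ̄μ}^ν ≠ 0` in `Γ`. So `Z_{λμ} ≠ 0` yields `θ ∈ Θ` with
`N_{λθ}^μ = N_{λ̄μ}^θ ≠ 0`, and the monodromy condition gives `ω_μ = ω_λ ω_θ = ω_λ`.
-/

noncomputable section

namespace FusionData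

variable {I : Type*} [Fintype I] (bar : I → I) (N : I → I → I → ℕ) (d : I → ℝ) (Y : I → I → ℂ)
  (Γ Θ : Finset I)

theorem sum_star_Y_mul_Y_eq_sum_N_mul
    (hYconj : ∀ l m, star (Y l m) = Y (bar l) m)
    (hYprod : ∀ l m r, Y l r * Y m r = (d r : ℂ) * ∑ v, (N l m v : ℂ) * Y v r) (l m : I) :
    ∑ γ ∈ Γ, star (Y l γ) * Y m γ
      = ∑ v, (N (bar l) m v : ℂ) * ∑ γ ∈ Γ, (d γ : ℂ) * Y v γ := by
  simp_rw [hYconj, hYprod, Finset.mul_sum, mul_left_comm (d _ : ℂ)]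
  exact Finset.sum_comm

theorem sum_N_mul_sum_d_mul_Y_eq
    (hΓfus : ∀ l ∈ Γ, ∀ m ∈ Γ, ∀ v, N l m v ≠ 0 → v ∈ Γ)
    (hdeg : ∀ μ ∈ Θ, ∑ γ ∈ Γ, (d γ : ℂ) * Y μ γ = ((∑ γ ∈ Γ, d γ ^ 2 : ℝ) : ℂ) * d μ)
    (hndeg : ∀ μ ∈ Γ, μ ∉ Θ → ∑ γ ∈ Γ, (d γ : ℂ) * Y μ γ = 0)
    {a b : I} (ha : a ∈ Γ) (hb : b ∈ Γ) :
    ∑ v, (N a b v : ℂ) * ∑ γ ∈ Γ, (d γ : ℂ) * Y v γ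
      = ((∑ γ ∈ Γ, d γ ^ 2 : ℝ) : ℂ) * ∑ θ ∈ Θ, (N a b θ : ℂ) * d θ := by
  have h_outside : ∀ v ∉ Θ, (N a b v : ℂ) * ∑ γ ∈ Γ, (d γ : ℂ) * Y v γ = 0 := by
    intro v hv
    by_cases hvΓ : v ∈ Γ
    · rw [hndeg v hvΓ hv, mul_zero]
    · have : N a b v = 0 := by_contra fun h => hvΓ (hΓfus a ha b hb v h)
      rw [this, Nat.cast_zero, zero_mul]
  rw [← Finset.sum_subset (Finset.subset_univ Θ) fun v _ hv => h_outside v hv, Finset.mul_sum]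
  refine Finset.sum_congr rfl fun θ hθ => ?_
  rw [hdeg θ hθ]
  ring

theorem exists_N_ne_zero_of_Zmat_ne_zero [DecidableEq I]
    (hYconj : ∀ l m, star (Y l m) = Y (bar l) m)
    (hYprod : ∀ l m r, Y l r * Y m r = (d r : ℂ) * ∑ v, (N l m v : ℂ) * Y v r)
    (hΓbar : ∀ γ ∈ Γ, bar γ ∈ Γ)
    (hΓfus : ∀ l ∈ Γ, ∀ m ∈ Γ, ∀ v, N l m v ≠ 0 → v ∈ Γ)
    (hdeg : ∀ μ ∈ Θ, ∑ γ ∈ Γ, (d γ : ℂ) * Y μ γ = ((∑ γ ∈ Γ, d γ ^ 2 : ℝ) : ℂ) * d μ)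
    (hndeg : ∀ μ ∈ Γ, μ ∉ Θ → ∑ γ ∈ Γ, (d γ : ℂ) * Y μ γ = 0)
    {l m : I} (hZ : Zmat Y d Γ l m ≠ 0) :
    l ∈ Γ ∧ m ∈ Γ ∧ ∃ θ ∈ Θ, N (bar l) m θ ≠ 0 := by
  unfold Zmat at hZ
  split_ifs at hZ with hlm
  · obtain ⟨hl, hm⟩ := hlm
    rw [sum_star_Y_mul_Y_eq_sum_N_mul bar N d Y Γ hYconj hYprod,
      sum_N_mul_sum_d_mul_Y_eq N d Y Γ Θ hΓfus hdeg hndeg (hΓbar l hl) hm] at hZ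
    obtain ⟨θ, hθ, hθ_ne⟩ := Finset.exists_ne_zero_of_sum_ne_zero (right_ne_zero_of_mul
      (right_ne_zero_of_mul hZ))
    exact ⟨hl, hm, θ, hθ, fun h => hθ_ne (by rw [h, Nat.cast_zero, zero_mul])⟩
  · exact absurd rfl hZ

end FusionData

theorem stmt8_general
    {I : Type*} [Fintype I] [DecidableEq I] (bar : I → I)
    (N : I → I → I → ℕ)
    (hFrob : ∀ l m v, N l m v = N (bar l) v m)
    (d : I → ℝ)
    (Y : I → I → ℂ)
    (hYconj : ∀ l m, star (Y l m) = Y (bar l) m)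
    (hYprod : ∀ l m r, Y l r * Y m r = (d r : ℂ) * ∑ v, (N l m v : ℂ) * Y v r)
    (Γ : Finset I) (hΓbar : ∀ γ ∈ Γ, bar γ ∈ Γ)
    (hΓfus : ∀ l ∈ Γ, ∀ m ∈ Γ, ∀ v, N l m v ≠ 0 → v ∈ Γ)
    (Θ : Finset I)
    (hdeg : ∀ μ ∈ Θ, ∑ γ ∈ Γ, (d γ : ℂ) * Y μ γ = ((∑ γ ∈ Γ, d γ ^ 2 : ℝ) : ℂ) * d μ)
    (hndeg : ∀ μ ∈ Γ, μ ∉ Θ → ∑ γ ∈ Γ, (d γ : ℂ) * Y μ γ = 0)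
    (ω : I → ℂ) (hω1 : ∀ θ ∈ Θ, ω θ = 1)
    (hmono : ∀ l ∈ Γ, ∀ m ∈ Γ, ∀ θ ∈ Θ, N l θ m ≠ 0 → ω m = ω l * ω θ) :
    (∀ l m : I, ω l * Zmat Y d Γ l m = Zmat Y d Γ l m * ω m) ∧
    Matrix.diagonal ω * Matrix.of (Zmat Y d Γ)
      = Matrix.of (Zmat Y d Γ) * Matrix.diagonal ω := by
  have hcomm : ∀ l m : I, ω l * Zmat Y d Γ l m = Zmat Y d Γ l m * ω m := by
    intro l m
    by_cases hZ : Zmat Y d Γ l m = 0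
    · rw [hZ, mul_zero, zero_mul]
    obtain ⟨hl, hm, θ, hθ, hN⟩ :=
      FusionData.exists_N_ne_zero_of_Zmat_ne_zero bar N d Y Γ Θ
      hYconj hYprod hΓbar hΓfus hdeg hndeg hZ
    rw [hmono l hl m hm θ hθ (hFrob l θ m ▸ hN), hω1 θ hθ, mul_one, mul_comm]
  refine ⟨hcomm, ?_⟩
  ext l m
  simpa only [Matrix.diagonal_mul, Matrix.mul_diagonal, Matrix.of_apply] using hcomm l m

theorem stmt8
    {I : Type*} [Fintype I] [DecidableEq I] (zero : I) (bar : I → I)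
    (hbar : Function.Involutive bar) (hbar0 : bar zero = zero)
    (N : I → I → I → ℕ)
    (hNsymm : ∀ l m v, N l m v = N m l v)
    (hN0 : ∀ l v, N zero l v = if l = v then 1 else 0)
    (hFrob : ∀ l m v, N l m v = N (bar l) v m)
    (d : I → ℝ) (hdpos : ∀ l, 0 < d l) (hd0 : d zero = 1)
    (hdbar : ∀ l, d (bar l) = d l)
    (Y : I → I → ℂ)
    (hYsymm : ∀ l m, Y l m = Y m l)
    (hY0 : ∀ l, Y zero l = d l)
    (hYconj : ∀ l m, star (Y l m) = Y (bar l) m)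
    (hYprod : ∀ l m r, Y l r * Y m r = (d r : ℂ) * ∑ v, (N l m v : ℂ) * Y v r)
    (Γ : Finset I) (hΓ0 : zero ∈ Γ) (hΓbar : ∀ γ ∈ Γ, bar γ ∈ Γ)
    (hΓfus : ∀ l ∈ Γ, ∀ m ∈ Γ, ∀ v, N l m v ≠ 0 → v ∈ Γ)
    (Θ : Finset I) (hΘΓ : Θ ⊆ Γ) (hΘ0 : zero ∈ Θ) (hΘbar : ∀ θ ∈ Θ, bar θ ∈ Θ)
    (hdeg : ∀ μ ∈ Θ, ∑ γ ∈ Γ, (d γ : ℂ) * Y μ γ = ((∑ γ ∈ Γ, d γ ^ 2 : ℝ) : ℂ) * d μ)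
    (hndeg : ∀ μ ∈ Γ, μ ∉ Θ → ∑ γ ∈ Γ, (d γ : ℂ) * Y μ γ = 0)
    (ω : I → ℂ) (hω1 : ∀ θ ∈ Θ, ω θ = 1)
    (hmono : ∀ l ∈ Γ, ∀ m ∈ Γ, ∀ θ ∈ Θ, N l θ m ≠ 0 → ω m = ω l * ω θ) :
    (∀ l m : I, ω l * Zmat Y d Γ l m = Zmat Y d Γ l m * ω m) ∧
    Matrix.diagonal ω * Matrix.of (Zmat Y d Γ)
      = Matrix.of (Zmat Y d Γ) * Matrix.diagonal ω :=
  stmt8_general bar N hFrob d Y hYconj hYprod Γ hΓbar hΓfus Θ hdeg hndeg ω hω1 hmono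
end
end

section
/- Under the fusion data hypotheses, assume in addition that Σ_{γ∈Γ} d_γ Y_{νγ} = 0 for every ν ∈ I ∖ Γ. Then for every λ ∈ I ∖ Γ and every μ ∈ Γ one has Σ_{γ∈Γ} conj(Y_{λγ}) · Y_{μγ} = 0. -/
noncomputable section

theorem stmt9
    {I : Type*} [Fintype I] [DecidableEq I] (zero : I) (bar : I → I)
    (hbar : Function.Involutive bar) (hbar0 : bar zero = zero)
    (N : I → I → I → ℕ)
    (hNsymm : ∀ l m v, N l m v = N m l v)
    (hN0 : ∀ l v, N zero l v = if l = v then 1 else 0)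
    (hFrob : ∀ l m v, N l m v = N (bar l) v m)
    (d : I → ℝ) (hdpos : ∀ l, 0 < d l) (hd0 : d zero = 1)
    (hdbar : ∀ l, d (bar l) = d l)
    (Y : I → I → ℂ)
    (hYsymm : ∀ l m, Y l m = Y m l)
    (hY0 : ∀ l, Y zero l = d l)
    (hYconj : ∀ l m, star (Y l m) = Y (bar l) m)
    (hYprod : ∀ l m r, Y l r * Y m r = (d r : ℂ) * ∑ v, (N l m v : ℂ) * Y v r)
    (Γ : Finset I) (hΓ0 : zero ∈ Γ) (hΓbar : ∀ γ ∈ Γ, bar γ ∈ Γ)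
    (hΓfus : ∀ l ∈ Γ, ∀ m ∈ Γ, ∀ v, N l m v ≠ 0 → v ∈ Γ)
    (Θ : Finset I) (hΘΓ : Θ ⊆ Γ) (hΘ0 : zero ∈ Θ) (hΘbar : ∀ θ ∈ Θ, bar θ ∈ Θ)
    (hdeg : ∀ μ ∈ Θ, ∑ γ ∈ Γ, (d γ : ℂ) * Y μ γ = ((∑ γ ∈ Γ, d γ ^ 2 : ℝ) : ℂ) * d μ)
    (hndeg : ∀ μ ∈ Γ, μ ∉ Θ → ∑ γ ∈ Γ, (d γ : ℂ) * Y μ γ = 0)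
    (hout : ∀ v : I, v ∉ Γ → ∑ γ ∈ Γ, (d γ : ℂ) * Y v γ = 0) :
    ∀ l : I, l ∉ Γ → ∀ m ∈ Γ, ∑ γ ∈ Γ, star (Y l γ) * Y m γ = 0 := by
  intro l hl m hm
  have key : ∀ γ : I, star (Y l γ) * Y m γ = (d γ : ℂ) * ∑ v, (N (bar l) m v : ℂ) * Y v γ := by
    intro γ
    rw [hYconj, hYprod]
  calc ∑ γ ∈ Γ, star (Y l γ) * Y m γ
      = ∑ v, (N (bar l) m v : ℂ) * ∑ γ ∈ Γ, (d γ : ℂ) * Y v γ := by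
        simp_rw [key, Finset.mul_sum]
        rw [Finset.sum_comm]
        apply Finset.sum_congr rfl
        intro v _
        apply Finset.sum_congr rfl
        intro γ _
        ring
    _ = 0 := by
        apply Finset.sum_eq_zero
        intro v _
        by_cases hNv : N (bar l) m v = 0
        · simp [hNv]
        · have h1 : N (bar m) v (bar l) ≠ 0 := by
            rw [← hFrob, hNsymm]; exact hNv
          have hvΓ : v ∉ Γ := by
            intro hvΓ
            apply hl
            have h2 := hΓfus (bar m) (hΓbar m hm) v hvΓ (bar l) h1
            have h3 := hΓbar _ h2
            rwa [hbar l] at h3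
          rw [hout v hvΓ, mul_zero]
end
end

section
/- Under the fusion data hypotheses, assume in addition that Σ_{γ∈Γ} d_γ Y_{νγ} = 0 for every ν ∈ I ∖ Γ. Then the matrix Z commutes with the matrix Y, i.e. Σ_{γ∈I} Y_{λγ} Z_{γμ} = Σ_{γ∈I} Z_{λγ} Y_{γμ} for all λ, μ ∈ I (Y-invariance of the coupling matrix Z). -/
/-!
By the product rule, `∑_{γ ∈ Γ} Y_{ργ} Y_{μγ}` is a fusion sum of the weighted column sums
`∑_{γ ∈ Γ} d_γ Y_{νγ}`, which vanish off `Θ` and equal `w_Γ d_ν` on `Θ`. For `θ ∈ Θ` the latter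
forces equality in the Perron–Frobenius bound `|Y_{θγ}| ≤ d_θ d_γ`, i.e. `Y_{θγ} = d_θ d_γ` on `Γ`.
With this the product rule collapses `Y Z` to `(∑_{θ ∈ Θ} d_θ²) Y` on `Γ × Γ` and, by
fusion-closedness of `Γ`, to `0` elsewhere. Since `Z_{λμ} = Z_{μ̄λ̄}` and `Y_{λμ} = Y_{μ̄λ̄}`, the
same holds for `Z Y`.
-/

noncomputable section

open Finset

theorem Complex.eq_of_norm_le_of_sum_mul_eq {ι : Type*} {s : Finset ι} {c a : ι → ℝ} {z : ι → ℂ}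
    (hc : ∀ i ∈ s, 0 < c i) (hz : ∀ i ∈ s, ‖z i‖ ≤ a i)
    (hsum : ∑ i ∈ s, (c i : ℂ) * z i = ((∑ i ∈ s, c i * a i : ℝ) : ℂ)) {i : ι} (hi : i ∈ s) :
    z i = a i := by
  have hre_le : ∀ j ∈ s, c j * (z j).re ≤ c j * a j := fun j hj =>
    mul_le_mul_of_nonneg_left ((z j).re_le_norm.trans (hz j hj)) (hc j hj).le
  have hre_sum : ∑ j ∈ s, c j * (z j).re = ∑ j ∈ s, c j * a j := by
    simpa [Complex.re_sum, Complex.mul_re] using congrArg Complex.re hsum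
  have hre : (z i).re = a i :=
    mul_left_cancel₀ (hc i hi).ne' ((sum_eq_sum_iff_of_le hre_le).mp hre_sum i hi)
  have him : (z i).im = 0 := Complex.abs_re_eq_norm.mp <|
    le_antisymm (Complex.abs_re_le_norm _) (hre.symm ▸ (hz i hi).trans (le_abs_self _))
  apply Complex.ext <;> simp [hre, him]

namespace Fusion

variable {I : Type*} {zero : I} {bar : I → I}
  {N : I → I → I → ℕ} {d : I → ℝ} {Y : I → I → ℂ}

theorem sum_fusion_mul_dim [Fintype I] (hYsymm : ∀ l m, Y l m = Y m l) (hY0 : ∀ l, Y zero l = d l)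
    (hd0 : d zero = 1) (hYprod : ∀ l m r, Y l r * Y m r = (d r : ℂ) * ∑ v, (N l m v : ℂ) * Y v r)
    (l m : I) : ∑ v, (N l m v : ℝ) * d v = d l * d m := by
  have h := hYprod l m zero
  simp only [hYsymm _ zero, hY0, hd0, Complex.ofReal_one, one_mul] at h
  exact_mod_cast h.symm

theorem norm_le_dim_mul_dim [Fintype I] (hdpos : ∀ l, 0 < d l) (hd0 : d zero = 1)
    (hY0 : ∀ l, Y zero l = d l)
    (hYprod : ∀ l m r, Y l r * Y m r = (d r : ℂ) * ∑ v, (N l m v : ℂ) * Y v r)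
    (hdim : ∀ l m, ∑ v, (N l m v : ℝ) * d v = d l * d m) (l ρ : I) :
    ‖Y l ρ‖ ≤ d l * d ρ := by
  -- compare with a row `μ` maximising `‖Y μ ρ‖ / d μ`
  obtain ⟨μ, -, hμ⟩ := exists_max_image univ (fun x => ‖Y x ρ‖ / d x) ⟨zero, mem_univ zero⟩
  have hratio : ∀ x, ‖Y x ρ‖ * d μ ≤ ‖Y μ ρ‖ * d x := fun x =>
    (div_le_div_iff₀ (hdpos x) (hdpos μ)).mp (hμ x (mem_univ x))
  have hμpos : 0 < ‖Y μ ρ‖ * d μ := by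
    have h := hratio zero
    rw [hY0, hd0, mul_one, Complex.norm_real, Real.norm_of_nonneg (hdpos ρ).le] at h
    exact mul_pos ((mul_pos (hdpos ρ) (hdpos μ)).trans_le h) (hdpos μ)
  refine le_of_mul_le_mul_right ?_ hμpos
  calc ‖Y l ρ‖ * (‖Y μ ρ‖ * d μ) = d ρ * ‖∑ v, (N l μ v : ℂ) * Y v ρ‖ * d μ := by
        rw [← mul_assoc, ← norm_mul, hYprod, norm_mul, Complex.norm_real,
          Real.norm_of_nonneg (hdpos ρ).le]
    _ ≤ d ρ * (∑ v, (N l μ v : ℝ) * ‖Y v ρ‖) * d μ := by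
        refine mul_le_mul_of_nonneg_right (mul_le_mul_of_nonneg_left
          ((norm_sum_le _ _).trans_eq ?_) (hdpos ρ).le) (hdpos μ).le
        simp only [norm_mul, Complex.norm_natCast]
    _ = d ρ * ∑ v, (N l μ v : ℝ) * (‖Y v ρ‖ * d μ) := by
        rw [mul_assoc, sum_mul]
        simp only [mul_assoc]
    _ ≤ d ρ * ∑ v, (N l μ v : ℝ) * (‖Y μ ρ‖ * d v) := by
        refine mul_le_mul_of_nonneg_left (sum_le_sum fun v _ => ?_) (hdpos ρ).le
        exact mul_le_mul_of_nonneg_left (hratio v) (Nat.cast_nonneg _)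
    _ = d l * d ρ * (‖Y μ ρ‖ * d μ) := by
        simp only [mul_left_comm _ ‖Y μ ρ‖, ← mul_sum, hdim]
        ring

theorem eq_dim_mul_dim_of_sum_eq (hdpos : ∀ l, 0 < d l) (hbound : ∀ l ρ, ‖Y l ρ‖ ≤ d l * d ρ)
    {Γ : Finset I} {μ : I}
    (hμ : ∑ γ ∈ Γ, (d γ : ℂ) * Y μ γ = ((∑ γ ∈ Γ, d γ ^ 2 : ℝ) : ℂ) * d μ)
    {γ : I} (hγ : γ ∈ Γ) : Y μ γ = d μ * d γ := by
  have hsum : ∑ γ ∈ Γ, (d γ : ℂ) * Y μ γ = ((∑ γ ∈ Γ, d γ * (d μ * d γ) : ℝ) : ℂ) := by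
    rw [hμ]; push_cast; rw [sum_mul]; exact sum_congr rfl fun _ _ => by ring
  exact_mod_cast Complex.eq_of_norm_le_of_sum_mul_eq (fun γ _ => hdpos γ)
    (fun γ _ => hbound μ γ) hsum hγ

theorem sum_Y_mul_Y [Fintype I] [DecidableEq I]
    (hYprod : ∀ l m r, Y l r * Y m r = (d r : ℂ) * ∑ v, (N l m v : ℂ) * Y v r)
    {Γ Θ : Finset I} {w : ℂ}
    (hcol : ∀ v, ∑ γ ∈ Γ, (d γ : ℂ) * Y v γ = if v ∈ Θ then w * d v else 0) (ρ m : I) :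
    ∑ γ ∈ Γ, Y ρ γ * Y m γ = w * ∑ θ ∈ Θ, (N ρ m θ : ℂ) * d θ := by
  calc ∑ γ ∈ Γ, Y ρ γ * Y m γ = ∑ v, (N ρ m v : ℂ) * ∑ γ ∈ Γ, (d γ : ℂ) * Y v γ := by
        simp only [hYprod, mul_sum]
        rw [sum_comm]
        exact sum_congr rfl fun _ _ => sum_congr rfl fun _ _ => mul_left_comm _ _ _
    _ = ∑ v, if v ∈ Θ then w * ((N ρ m v : ℂ) * d v) else 0 := by
        refine sum_congr rfl fun v _ => ?_
        rw [hcol, mul_ite, mul_zero, mul_left_comm]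
    _ = w * ∑ θ ∈ Θ, (N ρ m θ : ℂ) * d θ := by
        rw [sum_ite_mem, univ_inter, mul_sum]

theorem fusion_rotate (hbar : Function.Involutive bar) (hNsymm : ∀ l m v, N l m v = N m l v)
    (hFrob : ∀ l m v, N l m v = N (bar l) v m) (l ρ v : I) :
    N l (bar ρ) v = N (bar v) l ρ := by
  rw [hNsymm, hFrob, hbar, hNsymm, hFrob]

theorem dim_mul_sum_fusion_mul_Y [Fintype I] [DecidableEq I]
    (hFrob : ∀ l m v, N l m v = N (bar l) v m)
    (hYprod : ∀ l m r, Y l r * Y m r = (d r : ℂ) * ∑ v, (N l m v : ℂ) * Y v r)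
    {Γ : Finset I} (hΓbar : ∀ γ ∈ Γ, bar γ ∈ Γ)
    (hΓfus : ∀ l ∈ Γ, ∀ m ∈ Γ, ∀ v, N l m v ≠ 0 → v ∈ Γ) {a : I} (ha : a ∈ Γ) (l t : I) :
    (d t : ℂ) * ∑ ρ ∈ Γ, (N a l ρ : ℂ) * Y ρ t = if l ∈ Γ then Y a t * Y l t else 0 := by
  split_ifs with hl
  · rw [hYprod, sum_subset (subset_univ Γ)]
    intro ρ _ hρ
    rw [Nat.cast_eq_zero.mpr (not_not.mp fun h => hρ (hΓfus a ha l hl ρ h)), zero_mul]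
  · refine mul_eq_zero_of_right _ (sum_eq_zero fun ρ hρ => ?_)
    -- `N_{aλ}^ρ = N_{āρ}^λ`, and `λ ∉ Γ` cannot occur in `ā ⊗ ρ`
    have hN : N a l ρ = 0 := by
      by_contra h
      exact hl (hΓfus _ (hΓbar a ha) ρ hρ l (hFrob a l ρ ▸ h))
    rw [hN, Nat.cast_zero, zero_mul]

theorem bar_mem_iff (hbar : Function.Involutive bar) {Γ : Finset I}
    (hΓbar : ∀ γ ∈ Γ, bar γ ∈ Γ) (x : I) : bar x ∈ Γ ↔ x ∈ Γ :=
  ⟨fun h => hbar x ▸ hΓbar _ h, hΓbar x⟩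

theorem Y_bar_bar (hbar : Function.Involutive bar) (hYsymm : ∀ l m, Y l m = Y m l)
    (hYconj : ∀ l m, star (Y l m) = Y (bar l) m) (a b : I) : Y (bar a) (bar b) = Y b a := by
  rw [← hYconj, hYsymm, hYconj, hbar]

theorem Zmat_bar_bar [DecidableEq I] (hbar : Function.Involutive bar)
    (hYconj : ∀ l m, star (Y l m) = Y (bar l) m) {Γ : Finset I} (hΓbar : ∀ γ ∈ Γ, bar γ ∈ Γ)
    (l m : I) : Zmat Y d Γ (bar m) (bar l) = Zmat Y d Γ l m := by
  simp only [Zmat, bar_mem_iff hbar hΓbar, and_comm (a := m ∈ Γ), hYconj, hbar m, mul_comm]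

theorem sum_Zmat_mul_Y [Fintype I] [DecidableEq I] (hbar : Function.Involutive bar)
    (hYsymm : ∀ l m, Y l m = Y m l) (hYconj : ∀ l m, star (Y l m) = Y (bar l) m)
    {Γ : Finset I} (hΓbar : ∀ γ ∈ Γ, bar γ ∈ Γ) (l m : I) :
    ∑ γ, Zmat Y d Γ l γ * Y γ m = ∑ γ, Y (bar m) γ * Zmat Y d Γ γ (bar l) := by
  rw [← Equiv.sum_comp (hbar.toPerm bar) (fun γ => Zmat Y d Γ l γ * Y γ m)]
  refine sum_congr rfl fun γ _ => ?_
  rw [Function.Involutive.coe_toPerm, ← Zmat_bar_bar hbar hYconj hΓbar γ (bar l), hbar l,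
    ← hYconj, hYsymm, hYconj, mul_comm]

theorem sum_Y_mul_Zmat_of_mem [Fintype I] [DecidableEq I] (hbar : Function.Involutive bar)
    (hNsymm : ∀ l m v, N l m v = N m l v) (hFrob : ∀ l m v, N l m v = N (bar l) v m)
    (hYsymm : ∀ l m, Y l m = Y m l) (hYconj : ∀ l m, star (Y l m) = Y (bar l) m)
    (hYprod : ∀ l m r, Y l r * Y m r = (d r : ℂ) * ∑ v, (N l m v : ℂ) * Y v r)
    {Γ Θ : Finset I} (hw : ((∑ γ ∈ Γ, d γ ^ 2 : ℝ) : ℂ) ≠ 0)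
    (hcol : ∀ v, ∑ γ ∈ Γ, (d γ : ℂ) * Y v γ =
      if v ∈ Θ then ((∑ γ ∈ Γ, d γ ^ 2 : ℝ) : ℂ) * d v else 0)
    (l : I) {m : I} (hm : m ∈ Γ) :
    ∑ γ, Y l γ * Zmat Y d Γ γ m = ∑ θ ∈ Θ, (d θ : ℂ) * ∑ ρ ∈ Γ, (N (bar θ) l ρ : ℂ) * Y ρ m := by
  set w : ℂ := ((∑ γ ∈ Γ, d γ ^ 2 : ℝ) : ℂ)
  calc ∑ γ, Y l γ * Zmat Y d Γ γ m = ∑ γ ∈ Γ, Y l γ * Zmat Y d Γ γ m := by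
        refine (sum_subset (subset_univ Γ) fun γ _ hγ => ?_).symm
        simp [Zmat, hγ]
    _ = ∑ ρ ∈ Γ, w⁻¹ * (Y m ρ * ∑ γ ∈ Γ, Y l γ * Y (bar ρ) γ) := by
        simp only [mul_sum]
        rw [sum_comm]
        refine sum_congr rfl fun γ hγ => ?_
        rw [Zmat, if_pos ⟨hγ, hm⟩]
        simp only [mul_sum]
        refine sum_congr rfl fun ρ _ => ?_
        rw [hYsymm γ ρ, hYconj]
        ring
    _ = ∑ ρ ∈ Γ, ∑ θ ∈ Θ, (d θ : ℂ) * ((N (bar θ) l ρ : ℂ) * Y ρ m) := by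
        refine sum_congr rfl fun ρ _ => ?_
        rw [sum_Y_mul_Y hYprod hcol, mul_left_comm (Y m ρ), inv_mul_cancel_left₀ hw, mul_sum]
        refine sum_congr rfl fun θ _ => ?_
        rw [fusion_rotate hbar hNsymm hFrob, hYsymm m ρ]
        ring
    _ = ∑ θ ∈ Θ, (d θ : ℂ) * ∑ ρ ∈ Γ, (N (bar θ) l ρ : ℂ) * Y ρ m := by
        rw [sum_comm]
        simp only [mul_sum]

theorem sum_Y_mul_Zmat [Fintype I] [DecidableEq I] (hbar : Function.Involutive bar)
    (hNsymm : ∀ l m v, N l m v = N m l v) (hFrob : ∀ l m v, N l m v = N (bar l) v m)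
    (hdpos : ∀ l, 0 < d l) (hYsymm : ∀ l m, Y l m = Y m l)
    (hYconj : ∀ l m, star (Y l m) = Y (bar l) m)
    (hYprod : ∀ l m r, Y l r * Y m r = (d r : ℂ) * ∑ v, (N l m v : ℂ) * Y v r)
    {Γ Θ : Finset I} (hΓbar : ∀ γ ∈ Γ, bar γ ∈ Γ)
    (hΓfus : ∀ l ∈ Γ, ∀ m ∈ Γ, ∀ v, N l m v ≠ 0 → v ∈ Γ) (hΘΓ : Θ ⊆ Γ)
    (hw : ((∑ γ ∈ Γ, d γ ^ 2 : ℝ) : ℂ) ≠ 0)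
    (hcol : ∀ v, ∑ γ ∈ Γ, (d γ : ℂ) * Y v γ =
      if v ∈ Θ then ((∑ γ ∈ Γ, d γ ^ 2 : ℝ) : ℂ) * d v else 0)
    (hΘrow : ∀ θ ∈ Θ, ∀ γ ∈ Γ, Y θ γ = d θ * d γ) (l m : I) :
    ∑ γ, Y l γ * Zmat Y d Γ γ m =
      if l ∈ Γ ∧ m ∈ Γ then (∑ θ ∈ Θ, (d θ : ℂ) ^ 2) * Y l m else 0 := by
  by_cases hm : m ∈ Γ
  swap
  · simp [Zmat, hm]
  have hrow : ∀ θ ∈ Θ, ∑ ρ ∈ Γ, (N (bar θ) l ρ : ℂ) * Y ρ m =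
      if l ∈ Γ then d θ * Y l m else 0 := by
    intro θ hθ
    have hYbar : Y (bar θ) m = d θ * d m := by
      rw [← hYconj, hΘrow θ hθ m hm]
      simp
    refine mul_left_cancel₀ (Complex.ofReal_ne_zero.mpr (hdpos m).ne') ?_
    rw [dim_mul_sum_fusion_mul_Y hFrob hYprod hΓbar hΓfus (hΓbar θ (hΘΓ hθ)), hYbar]
    split_ifs <;> ring
  rw [sum_Y_mul_Zmat_of_mem hbar hNsymm hFrob hYsymm hYconj hYprod hw hcol l hm,
    sum_congr rfl fun θ hθ => by rw [hrow θ hθ]]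
  by_cases hl : l ∈ Γ
  · simp only [hl, hm, and_self, if_true, sum_mul]
    exact sum_congr rfl fun θ _ => by ring
  · simp [hl]

end Fusion

open Fusion in
theorem stmt10_general
    {I : Type*} [Fintype I] [DecidableEq I] (zero : I) (bar : I → I)
    (hbar : Function.Involutive bar)
    (N : I → I → I → ℕ)
    (hNsymm : ∀ l m v, N l m v = N m l v)
    (hFrob : ∀ l m v, N l m v = N (bar l) v m)
    (d : I → ℝ) (hdpos : ∀ l, 0 < d l) (hd0 : d zero = 1)
    (Y : I → I → ℂ)
    (hYsymm : ∀ l m, Y l m = Y m l)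
    (hY0 : ∀ l, Y zero l = d l)
    (hYconj : ∀ l m, star (Y l m) = Y (bar l) m)
    (hYprod : ∀ l m r, Y l r * Y m r = (d r : ℂ) * ∑ v, (N l m v : ℂ) * Y v r)
    (Γ : Finset I) (hΓ0 : zero ∈ Γ) (hΓbar : ∀ γ ∈ Γ, bar γ ∈ Γ)
    (hΓfus : ∀ l ∈ Γ, ∀ m ∈ Γ, ∀ v, N l m v ≠ 0 → v ∈ Γ)
    (Θ : Finset I) (hΘΓ : Θ ⊆ Γ)
    (hdeg : ∀ μ ∈ Θ, ∑ γ ∈ Γ, (d γ : ℂ) * Y μ γ = ((∑ γ ∈ Γ, d γ ^ 2 : ℝ) : ℂ) * d μ)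
    (hndeg : ∀ μ ∈ Γ, μ ∉ Θ → ∑ γ ∈ Γ, (d γ : ℂ) * Y μ γ = 0)
    (hout : ∀ v : I, v ∉ Γ → ∑ γ ∈ Γ, (d γ : ℂ) * Y v γ = 0) :
    ∀ l m : I, ∑ γ : I, Y l γ * Zmat Y d Γ γ m = ∑ γ : I, Zmat Y d Γ l γ * Y γ m := by
  have hdim := sum_fusion_mul_dim hYsymm hY0 hd0 hYprod
  have hbound := norm_le_dim_mul_dim hdpos hd0 hY0 hYprod hdim
  have hΘrow : ∀ θ ∈ Θ, ∀ γ ∈ Γ, Y θ γ = d θ * d γ := fun θ hθ _ hγ =>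
    eq_dim_mul_dim_of_sum_eq hdpos hbound (hdeg θ hθ) hγ
  have hcol : ∀ v, ∑ γ ∈ Γ, (d γ : ℂ) * Y v γ =
      if v ∈ Θ then ((∑ γ ∈ Γ, d γ ^ 2 : ℝ) : ℂ) * d v else 0 := by
    intro v
    split_ifs with hv
    · exact hdeg v hv
    · by_cases hvΓ : v ∈ Γ
      exacts [hndeg v hvΓ hv, hout v hvΓ]
  have hw : ((∑ γ ∈ Γ, d γ ^ 2 : ℝ) : ℂ) ≠ 0 := by
    exact_mod_cast (sum_pos (fun γ _ => pow_pos (hdpos γ) 2) ⟨zero, hΓ0⟩).ne'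
  have hYZ := sum_Y_mul_Zmat hbar hNsymm hFrob hdpos hYsymm hYconj hYprod hΓbar hΓfus hΘΓ hw
    hcol hΘrow
  intro l m
  rw [sum_Zmat_mul_Y hbar hYsymm hYconj hΓbar, hYZ, hYZ, Y_bar_bar hbar hYsymm hYconj]
  simp only [bar_mem_iff hbar hΓbar, and_comm]

theorem stmt10
    {I : Type*} [Fintype I] [DecidableEq I] (zero : I) (bar : I → I)
    (hbar : Function.Involutive bar) (hbar0 : bar zero = zero)
    (N : I → I → I → ℕ)
    (hNsymm : ∀ l m v, N l m v = N m l v)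
    (hN0 : ∀ l v, N zero l v = if l = v then 1 else 0)
    (hFrob : ∀ l m v, N l m v = N (bar l) v m)
    (d : I → ℝ) (hdpos : ∀ l, 0 < d l) (hd0 : d zero = 1)
    (hdbar : ∀ l, d (bar l) = d l)
    (Y : I → I → ℂ)
    (hYsymm : ∀ l m, Y l m = Y m l)
    (hY0 : ∀ l, Y zero l = d l)
    (hYconj : ∀ l m, star (Y l m) = Y (bar l) m)
    (hYprod : ∀ l m r, Y l r * Y m r = (d r : ℂ) * ∑ v, (N l m v : ℂ) * Y v r)
    (Γ : Finset I) (hΓ0 : zero ∈ Γ) (hΓbar : ∀ γ ∈ Γ, bar γ ∈ Γ)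
    (hΓfus : ∀ l ∈ Γ, ∀ m ∈ Γ, ∀ v, N l m v ≠ 0 → v ∈ Γ)
    (Θ : Finset I) (hΘΓ : Θ ⊆ Γ) (hΘ0 : zero ∈ Θ) (hΘbar : ∀ θ ∈ Θ, bar θ ∈ Θ)
    (hdeg : ∀ μ ∈ Θ, ∑ γ ∈ Γ, (d γ : ℂ) * Y μ γ = ((∑ γ ∈ Γ, d γ ^ 2 : ℝ) : ℂ) * d μ)
    (hndeg : ∀ μ ∈ Γ, μ ∉ Θ → ∑ γ ∈ Γ, (d γ : ℂ) * Y μ γ = 0)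
    (hout : ∀ v : I, v ∉ Γ → ∑ γ ∈ Γ, (d γ : ℂ) * Y v γ = 0) :
    ∀ l m : I, ∑ γ : I, Y l γ * Zmat Y d Γ γ m = ∑ γ : I, Zmat Y d Γ l γ * Y γ m :=
  stmt10_general zero bar hbar N hNsymm hFrob d hdpos hd0 Y hYsymm hY0 hYconj hYprod Γ hΓ0 hΓbar
    hΓfus Θ hΘΓ hdeg hndeg hout
end
end
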